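/- For every symmetric 3×3 real matrix A and every R ∈ SO(3), ⟨ψ(R), ψ(AR)⟩ ≥ 4·λ_min(Ā)·|R|_I²(1 − |R|_I²), where Ā := (1/2)(tr(A)·I − A) and λ_min(Ā) denotes its smallest eigenvalue. -/

import Mathlib

open Matrix

/-- `R ∈ SO(3)`: `R Rᵀ = I` and `det R = 1`. -/
def IsSO3 (R : Matrix (Fin 3) (Fin 3) ℝ) : Prop := R * Rᵀ = 1 ∧ R.det = 1

/-- `ψ(A) = vex(P_a(A))` where `P_a(A) = (A - Aᵀ)/2`. -/
noncomputable def psi (A : Matrix (Fin 3) (Fin 3) ℝ) : Fin 3 → ℝ :=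
  ![(A 2 1 - A 1 2)/2, (A 0 2 - A 2 0)/2, (A 1 0 - A 0 1)/2]

/-- Squared normalized Euclidean distance on SO(3): `|R|_I² = (1/4) tr(I - R)`. -/
noncomputable def distI2 (R : Matrix (Fin 3) (Fin 3) ℝ) : ℝ :=
  (1/4) * Matrix.trace (1 - R)

/-- `Ā = (1/2)(tr(A)·I - A)`. -/
noncomputable def abar (A : Matrix (Fin 3) (Fin 3) ℝ) : Matrix (Fin 3) (Fin 3) ℝ :=
  (1/2 : ℝ) • (Matrix.trace A • (1 : Matrix (Fin 3) (Fin 3) ℝ) - A)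

/-! Write `x = ψ(R)`. For symmetric `A` and normal `R`, the quantity `⟨x, ψ(AR)⟩` equals the
quadratic form `⟨x, Ā x⟩`, and for `R ∈ SO(3)` the identities `R Rᵀ = I` and `adj R = Rᵀ` give
`|x|² = 4 |R|_I² (1 - |R|_I²)`. The claim is then the Rayleigh bound `λ_min(Ā) |x|² ≤ ⟨x, Ā x⟩`. -/

namespace Matrix.IsHermitian

variable {n : Type*} [Fintype n] [DecidableEq n] {H : Matrix n n ℝ}

theorem posSemidef_sub_iInf_eigenvalues_smul_one (hH : H.IsHermitian) :
    (H - (⨅ i, hH.eigenvalues i) • (1 : Matrix n n ℝ)).PosSemidef := by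
  refine posSemidef_iff_isHermitian_and_spectrum_nonneg.mpr
    ⟨hH.sub (isHermitian_one.smul (IsSelfAdjoint.all _)), ?_⟩
  rw [← Algebra.algebraMap_eq_smul_one, ← spectrum.sub_singleton_eq,
    hH.spectrum_real_eq_range_eigenvalues]
  rintro _ ⟨_, ⟨i, rfl⟩, _, rfl, rfl⟩
  exact sub_nonneg.mpr (ciInf_le (Set.finite_range hH.eigenvalues).bddBelow i)

theorem iInf_eigenvalues_mul_dotProduct_self_le (hH : H.IsHermitian) (x : n → ℝ) :
    (⨅ i, hH.eigenvalues i) * (x ⬝ᵥ x) ≤ x ⬝ᵥ (H *ᵥ x) := by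
  have h := hH.posSemidef_sub_iInf_eigenvalues_smul_one.dotProduct_mulVec_nonneg x
  rw [star_trivial, sub_mulVec, dotProduct_sub, smul_mulVec, one_mulVec, dotProduct_smul,
    smul_eq_mul] at h
  linarith

end Matrix.IsHermitian

lemma psi_dotProduct_psi_mul_eq_abar {A R : Matrix (Fin 3) (Fin 3) ℝ} (hA : Aᵀ = A)
    (hR : R * Rᵀ = Rᵀ * R) :
    psi R ⬝ᵥ psi (A * R) = psi R ⬝ᵥ (abar A *ᵥ psi R) := by
  have h (i j : Fin 3) : (R * Rᵀ) i j = (Rᵀ * R) i j := by rw [hR]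
  have hsymm (i j : Fin 3) : A j i = A i j := by rw [← transpose_apply A, hA]
  simp only [mul_apply, transpose_apply, Fin.sum_univ_three] at h
  simp only [abar, smul_mulVec, sub_mulVec, one_mulVec, dotProduct_smul, dotProduct_sub]
  simp only [psi, dotProduct, mulVec, mul_apply, Fin.sum_univ_three, trace_fin_three,
    smul_eq_mul, cons_val_zero, cons_val_one, cons_val_two, head_cons, tail_cons,
    hsymm 0 1, hsymm 0 2, hsymm 1 2]
  linear_combination (A 0 0 / 8) * h 0 0 + (A 0 1 / 8) * (h 0 1 + h 1 0) +
    (A 0 2 / 8) * (h 0 2 + h 2 0) + (A 1 1 / 8) * h 1 1 + (A 1 2 / 8) * (h 1 2 + h 2 1) +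
    (A 2 2 / 8) * h 2 2

lemma IsSO3.adjugate_eq_transpose {R : Matrix (Fin 3) (Fin 3) ℝ} (hR : IsSO3 R) :
    R.adjugate = Rᵀ := by
  calc R.adjugate = Rᵀ * R * R.adjugate := by rw [mul_eq_one_comm.mp hR.1, one_mul]
    _ = Rᵀ := by rw [Matrix.mul_assoc, mul_adjugate, hR.2, one_smul, mul_one]

lemma IsSO3.psi_dotProduct_self {R : Matrix (Fin 3) (Fin 3) ℝ} (hR : IsSO3 R) :
    psi R ⬝ᵥ psi R = 4 * distI2 R * (1 - distI2 R) := by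
  have hcof (i : Fin 3) : R.adjugate i i = R i i := by
    rw [hR.adjugate_eq_transpose, transpose_apply]
  have horth (i : Fin 3) : (R * Rᵀ) i i = 1 := by rw [hR.1, one_apply_eq]
  have c0 := hcof 0; have c1 := hcof 1; have c2 := hcof 2
  simp only [adjugate_fin_three, of_apply, cons_val', cons_val_zero, cons_val_one, cons_val_two,
    empty_val', cons_val_fin_one, tail_cons, vecHead] at c0 c1 c2
  simp only [mul_apply, transpose_apply, Fin.sum_univ_three] at horth
  simp only [psi, distI2, dotProduct, Fin.sum_univ_three, trace_fin_three, Matrix.sub_apply,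
    one_apply_eq, cons_val_zero, cons_val_one, cons_val_two, head_cons, tail_cons]
  linear_combination (1/4) * (horth 0 + horth 1 + horth 2) + (1/2) * (c0 + c1 + c2)

/-- For symmetric `A` and `R ∈ SO(3)`:
`⟨ψ(R), ψ(AR)⟩ ≥ 4 λ_min(Ā) |R|_I² (1 - |R|_I²)`. -/
theorem stmt16 (A R : Matrix (Fin 3) (Fin 3) ℝ) (hA : Aᵀ = A)
    (hH : (abar A).IsHermitian) (hR : IsSO3 R) :
    4 * (⨅ i : Fin 3, hH.eigenvalues i) * distI2 R * (1 - distI2 R) ≤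
      psi R ⬝ᵥ psi (A * R) := by
  have hnormal : R * Rᵀ = Rᵀ * R := hR.1.trans (mul_eq_one_comm.mp hR.1).symm
  calc 4 * (⨅ i, hH.eigenvalues i) * distI2 R * (1 - distI2 R)
      = (⨅ i, hH.eigenvalues i) * (psi R ⬝ᵥ psi R) := by rw [hR.psi_dotProduct_self]; ring
    _ ≤ psi R ⬝ᵥ (abar A *ᵥ psi R) := hH.iInf_eigenvalues_mul_dotProduct_self_le _
    _ = psi R ⬝ᵥ psi (A * R) := (psi_dotProduct_psi_mul_eq_abar hA hnormal).symm
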